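/- Let G be a simple graph, {a,b} an edge of G, and G' = G − {a,b}. Let G* and G'_* be the augmented graphs of G and G' with universal vertex u*, let M* be a Moore–Penrose pseudoinverse of L_{G*}, M'* a Moore–Penrose pseudoinverse of L_{G'_*}, and r* = M*[a,a] − 2·M*[a,b] + M*[b,b]. If r* ≠ 1, then M*[u*,u*] − M'*[u*,u*] = −(M*[u*,a] − M*[u*,b])² / (1 − r*). -/

import Mathlib

open Matrix BigOperators

/-- `M` is a Moore–Penrose pseudoinverse of `L`. -/
def IsMoorePenrose {n : Type*} [Fintype n] (L M : Matrix n n ℝ) : Prop :=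
  L * M * L = L ∧ M * L * M = M ∧ (L * M)ᵀ = L * M ∧ (M * L)ᵀ = M * L

/-- The augmented graph `G*` of `G`: a new universal vertex `none` is joined
to every vertex of `G`. -/
def augment {V : Type*} (G : SimpleGraph V) : SimpleGraph (Option V) :=
  SimpleGraph.fromRel fun x y =>
    (∃ u v, x = some u ∧ y = some v ∧ G.Adj u v) ∨ x = none ∨ y = none

instance augmentAdjDecidable {V : Type*} [Fintype V] [DecidableEq V]
    (G : SimpleGraph V) [DecidableRel G.Adj] : DecidableRel (augment G).Adj :=
  fun x y => decidable_of_iff' _ (SimpleGraph.fromRel_adj _ x y)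

instance deleteEdgeAdjDecidable {V : Type*} [DecidableEq V]
    (G : SimpleGraph V) [DecidableRel G.Adj] (a b : V) :
    DecidableRel (G.deleteEdges {s(a, b)}).Adj := fun x y =>
  decidable_of_iff (G.Adj x y ∧ ¬s(x, y) = s(a, b)) (by simp)

/-!
Deleting the edge `{a, b}` lowers the Laplacian `L` of `G*` by the rank-one matrix `e eᵀ`, where
`e = 𝟙_a - 𝟙_b`. Since `a` and `b` are adjacent, `e` is orthogonal to the kernel of `L`, hence lies
in its range, and the Sherman–Morrison formula survives for pseudoinverses:
`M* + (1 - r*)⁻¹ (M* e)(M* e)ᵀ` satisfies the four Penrose equations for `L - e eᵀ`, so it is `M'*`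
by uniqueness. Its `(u*, u*)` entry is the claimed formula.
-/

namespace SimpleGraph

variable {W R : Type*} [DecidableEq W] [CommRing R] {u v : W}

theorem adjMatrix_deleteEdges_singleton (H : SimpleGraph W) [DecidableRel H.Adj]
    [DecidableRel (H.deleteEdges {s(u, v)}).Adj] (huv : H.Adj u v) :
    (H.deleteEdges {s(u, v)}).adjMatrix R =
      H.adjMatrix R + vecMulVec (Pi.single u 1 - Pi.single v 1) (Pi.single u 1 - Pi.single v 1)
        - diagonal ((Pi.single u 1 - Pi.single v 1) * (Pi.single u 1 - Pi.single v 1)) := by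
  have huv' := huv.ne
  ext i j
  by_cases hij : i = j
  · subst hij
    simp [diagonal, vecMulVec_apply]
  · simp only [Matrix.sub_apply, Matrix.add_apply, adjMatrix_apply, deleteEdges_adj,
      vecMulVec_apply, diagonal_apply_ne _ hij, Pi.sub_apply, Pi.single_apply,
      Set.mem_singleton_iff, Sym2.eq_iff]
    by_cases hiu : i = u <;> by_cases hiv : i = v <;> by_cases hju : j = u <;>
      by_cases hjv : j = v <;> simp_all [H.adj_comm]

theorem lapMatrix_deleteEdges_singleton [Fintype W] (H : SimpleGraph W) [DecidableRel H.Adj]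
    [DecidableRel (H.deleteEdges {s(u, v)}).Adj] (huv : H.Adj u v) :
    (H.deleteEdges {s(u, v)}).lapMatrix R =
      H.lapMatrix R -
        vecMulVec (Pi.single u 1 - Pi.single v 1) (Pi.single u 1 - Pi.single v 1) := by
  have hA := adjMatrix_deleteEdges_singleton (R := R) H huv
  set e : W → R := Pi.single u 1 - Pi.single v 1
  have he : e ⬝ᵥ Function.const W 1 = 0 := by
    simp [e, sub_dotProduct, single_dotProduct]
  have hdeg : (H.deleteEdges {s(u, v)}).degMatrix R = H.degMatrix R - diagonal (e * e) := by
    rw [degMatrix, degMatrix, diagonal_sub]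
    congr 1
    ext i
    have h := congrFun (congrArg (· *ᵥ Function.const W (1 : R)) hA) i
    simp only [adjMatrix_mulVec_const_apply, mul_one] at h
    rw [h, Matrix.sub_mulVec, Matrix.add_mulVec, vecMulVec_mulVec, he]
    simp [mulVec_diagonal]
  rw [lapMatrix, lapMatrix, hdeg, hA]
  abel

end SimpleGraph

theorem augment_deleteEdges {V : Type*} (G : SimpleGraph V) (a b : V) :
    augment (G.deleteEdges {s(a, b)}) = (augment G).deleteEdges {s(some a, some b)} := by
  ext x y
  cases x <;> cases y <;> simp [augment, SimpleGraph.fromRel_adj, SimpleGraph.adj_comm]; tauto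

namespace IsMoorePenrose

variable {n : Type*} [Fintype n] {L M : Matrix n n ℝ}

theorem unique {M' : Matrix n n ℝ} (h : IsMoorePenrose L M) (h' : IsMoorePenrose L M') :
    M = M' := by
  obtain ⟨a1, b1, c1, d1⟩ := h
  obtain ⟨a2, b2, c2, d2⟩ := h'
  have hLM : L * M = L * M' := by
    calc L * M = (L * M') * (L * M) := by rw [← Matrix.mul_assoc, a2]
      _ = ((L * M) * (L * M'))ᵀ := by rw [transpose_mul, c1, c2]
      _ = L * M' := by rw [← Matrix.mul_assoc, a1, c2]
  have hML : M * L = M' * L := by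
    calc M * L = (M * L) * (M' * L) := by rw [Matrix.mul_assoc, ← Matrix.mul_assoc L, a2]
      _ = ((M' * L) * (M * L))ᵀ := by rw [transpose_mul, d1, d2]
      _ = M' * L := by rw [Matrix.mul_assoc, ← Matrix.mul_assoc L, a1, d2]
  calc M = M' * L * M := by rw [← hML, b1]
    _ = M' := by rw [Matrix.mul_assoc, hLM, ← Matrix.mul_assoc, b2]

theorem transpose (h : IsMoorePenrose L M) : IsMoorePenrose Lᵀ Mᵀ := by
  obtain ⟨h1, h2, h3, h4⟩ := h
  refine ⟨?_, ?_, ?_, ?_⟩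
  · rw [← transpose_mul, ← transpose_mul, ← Matrix.mul_assoc, h1]
  · rw [← transpose_mul, ← transpose_mul, ← Matrix.mul_assoc, h2]
  · rw [← transpose_mul, h4, h4]
  · rw [← transpose_mul, h3, h3]

theorem isSymm (h : IsMoorePenrose L M) (hL : L.IsSymm) : M.IsSymm :=
  (hL.eq ▸ h.transpose).unique h

theorem mulVec_mulVec_eq_self_of_forall_vecMul_eq_zero {e : n → ℝ} (h : IsMoorePenrose L M)
    (he : ∀ x, x ᵥ* L = 0 → x ⬝ᵥ e = 0) : L *ᵥ M *ᵥ e = e := by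
  obtain ⟨h1, -, h3, -⟩ := h
  set v := e - (L * M) *ᵥ e with hv
  have hvL : v ᵥ* L = 0 := by
    rw [hv, ← vecMul_transpose, h3, sub_vecMul, vecMul_vecMul, h1, sub_self]
  have hPv : (L * M) *ᵥ v = 0 := by
    rw [mulVec_sub, mulVec_mulVec, ← Matrix.mul_assoc, h1, sub_self]
  -- `v ⬝ᵥ v = v ⬝ᵥ e - (L * M *ᵥ v) ⬝ᵥ e`, and both terms vanish by the two facts above.
  have hvv : v ⬝ᵥ v = 0 := by
    rw [dotProduct_sub, he v hvL, dotProduct_mulVec, ← h3, vecMul_transpose, hPv,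
      zero_dotProduct, sub_zero]
  rw [mulVec_mulVec, ← sub_eq_zero.mp (dotProduct_self_eq_zero.mp hvv)]

theorem sub_vecMulVec (h : IsMoorePenrose L M) (hL : L.IsSymm) {e : n → ℝ}
    (he : L *ᵥ M *ᵥ e = e) (hr : e ⬝ᵥ M *ᵥ e ≠ 1) :
    IsMoorePenrose (L - vecMulVec e e)
      (M + (1 - e ⬝ᵥ M *ᵥ e)⁻¹ • vecMulVec (M *ᵥ e) (M *ᵥ e)) := by
  have hM := h.isSymm hL
  obtain ⟨h1, h2, h3, -⟩ := h
  set w := M *ᵥ e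
  set c := (1 - e ⬝ᵥ w)⁻¹
  have hc : c * (1 - e ⬝ᵥ w) = 1 := inv_mul_cancel₀ (sub_ne_zero.mpr hr.symm)
  have hML : M * L = L * M := by rw [← hM.eq, ← hL.eq, ← transpose_mul, h3, hM.eq, hL.eq]
  have hPe : (L * M) *ᵥ e = e := by rw [← mulVec_mulVec]; exact he
  have hPw : (L * M) *ᵥ w = w := by rw [← hML, ← mulVec_mulVec, he]
  have hEM : vecMulVec e e * M = vecMulVec e w := by
    rw [vecMulVec_mul, ← hM.eq, vecMul_transpose]
  have hsymm : (L - vecMulVec e e)ᵀ = L - vecMulVec e e := by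
    rw [transpose_sub, hL.eq, transpose_vecMulVec]
  have hNsymm : (M + c • vecMulVec w w)ᵀ = M + c • vecMulVec w w := by
    rw [transpose_add, transpose_smul, hM.eq, transpose_vecMulVec]
  have hLN : (L - vecMulVec e e) * (M + c • vecMulVec w w) = L * M := by
    rw [Matrix.sub_mul, Matrix.mul_add, Matrix.mul_add, Matrix.mul_smul, Matrix.mul_smul,
      mul_vecMulVec, he, hEM, vecMulVec_mul_vecMulVec, vecMulVec_smul]
    calc L * M + c • vecMulVec e w - (vecMulVec e w + c • (e ⬝ᵥ w) • vecMulVec e w)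
        = L * M + (c * (1 - e ⬝ᵥ w) - 1) • vecMulVec e w := by module
      _ = L * M := by rw [hc, sub_self, zero_smul, add_zero]
  have hNL : (M + c • vecMulVec w w) * (L - vecMulVec e e) = L * M := by
    rw [← hsymm, ← hNsymm, ← transpose_mul, hLN, h3]
  refine ⟨?_, ?_, ?_, ?_⟩
  · rw [hLN, Matrix.mul_sub, h1, mul_vecMulVec, hPe]
  · rw [hNL, Matrix.mul_add, Matrix.mul_smul, mul_vecMulVec, hPw, ← hML, h2]
  · rw [hLN, h3]
  · rw [hNL, h3]

end IsMoorePenrose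

theorem augmented_pseudoinverse_universal_entry_update {V : Type*} [Fintype V]
    [DecidableEq V] (G : SimpleGraph V) [DecidableRel G.Adj]
    (a b : V) (hab : G.Adj a b)
    (M : Matrix (Option V) (Option V) ℝ)
    (hM : IsMoorePenrose ((augment G).lapMatrix ℝ) M)
    (M' : Matrix (Option V) (Option V) ℝ)
    (hM' : IsMoorePenrose ((augment (G.deleteEdges {s(a, b)})).lapMatrix ℝ) M')
    (hr : M (some a) (some a) - 2 * M (some a) (some b) + M (some b) (some b) ≠ 1) :
    M none none - M' none none =
      -(M none (some a) - M none (some b)) ^ 2 /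
        (1 - (M (some a) (some a) - 2 * M (some a) (some b) + M (some b) (some b))) := by
  set L := (augment G).lapMatrix ℝ
  set e : Option V → ℝ := Pi.single (some a) 1 - Pi.single (some b) 1
  have hadj : (augment G).Adj (some a) (some b) := by simp [augment, hab, hab.ne]
  have hL : L.IsSymm := (augment G).isSymm_lapMatrix (R := ℝ)
  have hL' : (augment (G.deleteEdges {s(a, b)})).lapMatrix ℝ = L - vecMulVec e e := by
    convert (augment G).lapMatrix_deleteEdges_singleton hadj using 2
    exact augment_deleteEdges G a b
  have hLMe : L *ᵥ M *ᵥ e = e :=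
    hM.mulVec_mulVec_eq_self_of_forall_vecMul_eq_zero fun x hx => by
      rw [← mulVec_transpose, hL.eq, SimpleGraph.lapMatrix_mulVec_eq_zero_iff_forall_adj] at hx
      simp [e, dotProduct_sub, hx _ _ hadj]
  have hMe : M *ᵥ e = fun x => M x (some a) - M x (some b) := by
    ext x
    simp [e, mulVec_sub]
  have hr' :
      e ⬝ᵥ M *ᵥ e = M (some a) (some a) - 2 * M (some a) (some b) + M (some b) (some b) := by
    have hba := congrFun₂ (hM.isSymm hL).eq (some a) (some b)
    simp only [transpose_apply] at hba
    simp only [hMe, e, sub_dotProduct, single_dotProduct, one_mul, hba]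
    ring
  rw [← hr'] at hr
  rw [hM'.unique (hL' ▸ hM.sub_vecMulVec hL hLMe hr), hr']
  simp only [Matrix.add_apply, Matrix.smul_apply, vecMulVec_apply, hMe, smul_eq_mul]
  ring
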